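/- Let P be a Φ-reduction for a QBF Φ = ∀X∃Y∀Z φ with φ in DNF. If Φ is true, then P is super-coherent: for every set F ⊆ U of facts, AS(P ∪ F) ≠ ∅. -/

import Mathlib

structure Rule (A : Type) where
  head : Set A
  pos : Set A
  neg : Set A

abbrev Program (A : Type) := Set (Rule A)

def satRule {A : Type} (I : Set A) (r : Rule A) : Prop :=
  r.pos ⊆ I → r.neg ∩ I = ∅ → (r.head ∩ I).Nonempty

def isModel {A : Type} (P : Program A) (I : Set A) : Prop := ∀ r ∈ P, satRule I r

def reduct {A : Type} (P : Program A) (K : Set A) : Program A :=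
  {r' | ∃ r ∈ P, r.neg ∩ K = ∅ ∧ r' = ⟨r.head, r.pos, ∅⟩}

def isAnswerSet {A : Type} (P : Program A) (M : Set A) : Prop :=
  isModel (reduct P M) M ∧ ∀ N ⊆ M, isModel (reduct P M) N → N = M

def factsOf {A : Type} (F : Set A) : Program A := {r | ∃ a ∈ F, r = ⟨{a}, ∅, ∅⟩}

def superCoherent {A : Type} (P : Program A) : Prop :=
  ∀ F : Set A, ∃ M, isAnswerSet (P ∪ factsOf F) M

def atomsOf {A : Type} (P : Program A) : Set A :=
  ⋃ r ∈ P, (r.head ∪ r.pos ∪ r.neg)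

def Uall {A : Type} (X Y Z : Set A) (bar : A → A) (u v w : A) : Set A :=
  X ∪ Y ∪ Z ∪ bar '' X ∪ bar '' Y ∪ bar '' Z ∪ {u, v, w}

def Mmod {A : Type} (X Y Z : Set A) (bar : A → A) (u v : A) (I J : Set A) : Set A :=
  I ∪ bar '' (X \ I) ∪ J ∪ bar '' (Y \ J) ∪ Z ∪ bar '' Z ∪ {u, v}

def Mmod' {A : Type} (X Y Z : Set A) (bar : A → A) (v w : A) (I J : Set A) : Set A :=
  I ∪ bar '' (X \ I) ∪ J ∪ bar '' (Y \ J) ∪ Z ∪ bar '' Z ∪ {v, w}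

def Omod {A : Type} (X : Set A) (bar : A → A) (I : Set A) : Set A := I ∪ bar '' (X \ I)

def Nmod {A : Type} (X Y Z : Set A) (bar : A → A) (v : A) (I J K : Set A) : Set A :=
  I ∪ bar '' (X \ I) ∪ J ∪ bar '' (Y \ J) ∪ K ∪ bar '' (Z \ K) ∪ {v}

/-!
Fix the facts `F ⊆ U`. If `F` contains a complementary pair over `X` or `Y`, or both `u` and `w`,
then no proper model of `P^U` contains `F`, because none of `M[I,J]`, `M'[I,J]`, `O[I]`,
`N[I,J,K]` does; so `U` is an answer set. Otherwise put `I = F ∩ X`. If `F ⊆ X ∪ X̄`, the truth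
of `Φ` gives `J` with `I ∪ J ∪ K ⊨ φ` for all `K`, so `P^{M'[I,J]}` has no proper model and
`M'[I,J]` is an answer set. If `F ⊄ X ∪ X̄` and `w ∉ F`, then `M[I, F ∩ Y]` is one, its only
proper reduct model `O[I]` missing part of `F`; if `w ∈ F`, then `M'[I, F ∩ Y]` is one, since no
`N[I,J,K]` contains `w`. Facts outside `U` are never mentioned by `P` and are simply added.
-/

open Set

section AnswerSets

variable {A : Type} {P Q : Program A} {F K K' M N S : Set A}

theorem reduct_union : reduct (P ∪ Q) K = reduct P K ∪ reduct Q K := by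
  ext r'
  simp only [reduct, mem_union, mem_ofPred_eq]
  constructor
  · rintro ⟨r, hr | hr, hK, rfl⟩
    exacts [Or.inl ⟨r, hr, hK, rfl⟩, Or.inr ⟨r, hr, hK, rfl⟩]
  · rintro (⟨r, hr, hK, rfl⟩ | ⟨r, hr, hK, rfl⟩)
    exacts [⟨r, Or.inl hr, hK, rfl⟩, ⟨r, Or.inr hr, hK, rfl⟩]

theorem reduct_factsOf : reduct (factsOf F) K = factsOf F := by
  ext r'
  constructor
  · rintro ⟨r, ⟨a, ha, rfl⟩, -, rfl⟩
    exact ⟨a, ha, rfl⟩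
  · rintro ⟨a, ha, rfl⟩
    exact ⟨_, ⟨a, ha, rfl⟩, empty_inter K, rfl⟩

theorem isModel_union : isModel (P ∪ Q) N ↔ isModel P N ∧ isModel Q N := by
  simp only [isModel, mem_union, or_imp, forall_and]

theorem isModel_factsOf : isModel (factsOf F) N ↔ F ⊆ N := by
  constructor
  · intro h a ha
    simpa using h _ ⟨a, ha, rfl⟩ (empty_subset N) (empty_inter N)
  · rintro hF r ⟨a, ha, rfl⟩ - -
    simpa using hF ha

theorem isAnswerSet_union_factsOf_iff : isAnswerSet (P ∪ factsOf F) M ↔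
    F ⊆ M ∧ isModel (reduct P M) M ∧ ∀ N ⊆ M, isModel (reduct P M) N → F ⊆ N → N = M := by
  simp only [isAnswerSet, reduct_union, reduct_factsOf, isModel_union, isModel_factsOf]
  constructor
  · rintro ⟨⟨hM, hFM⟩, hmin⟩
    exact ⟨hFM, hM, fun N hNM hN hFN => hmin N hNM ⟨hN, hFN⟩⟩
  · rintro ⟨hFM, hM, hmin⟩
    exact ⟨⟨hM, hFM⟩, fun N hNM ⟨hN, hFN⟩ => hmin N hNM hN hFN⟩

theorem isAnswerSet_union_factsOf_of_models {R : Set A → Prop}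
    (hmodels : ∀ N ⊆ M, isModel (reduct P M) N ↔ N = M ∨ R N) (hFM : F ⊆ M)
    (hR : ∀ N, R N → ¬F ⊆ N) : isAnswerSet (P ∪ factsOf F) M := by
  refine isAnswerSet_union_factsOf_iff.mpr
    ⟨hFM, (hmodels M subset_rfl).mpr (Or.inl rfl), fun N hNM hN hFN => ?_⟩
  exact ((hmodels N hNM).mp hN).resolve_right fun hRN => hR N hRN hFN

theorem satRule_inter_iff {r : Rule A} (hr : r.head ∪ r.pos ∪ r.neg ⊆ S) :
    satRule (N ∩ S) r ↔ satRule N r := by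
  have inter_inter_eq {T : Set A} (hT : T ⊆ S) : T ∩ (N ∩ S) = T ∩ N := by
    rw [inter_comm N, ← inter_assoc, inter_eq_left.mpr hT]
  simp only [union_subset_iff] at hr
  simp only [satRule, subset_inter_iff, hr.1.2, and_true, inter_inter_eq hr.1.1,
    inter_inter_eq hr.2]

theorem atomsOf_reduct_subset : atomsOf (reduct P K) ⊆ atomsOf P := by
  intro a ha
  simp only [atomsOf, mem_iUnion] at ha ⊢
  obtain ⟨_, ⟨r, hr, -, rfl⟩, ha⟩ := ha
  exact ⟨r, hr, Or.inl (by simpa using ha)⟩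

theorem isModel_inter_iff (hP : atomsOf P ⊆ S) : isModel P (N ∩ S) ↔ isModel P N :=
  forall₂_congr fun _ hr => satRule_inter_iff ((subset_biUnion_of_mem hr).trans hP)

theorem reduct_congr (h : K ∩ atomsOf P = K' ∩ atomsOf P) : reduct P K = reduct P K' := by
  have neg_inter_eq {r : Rule A} (hr : r ∈ P) (L : Set A) : r.neg ∩ L = r.neg ∩ (L ∩ atomsOf P) := by
    have hneg : r.neg ⊆ atomsOf P := fun a ha => mem_biUnion hr (Or.inr ha)
    rw [inter_comm L, ← inter_assoc, inter_eq_left.mpr hneg]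
  ext r'
  constructor
  · rintro ⟨r, hr, hK, rfl⟩
    exact ⟨r, hr, by rwa [neg_inter_eq hr, ← h, ← neg_inter_eq hr], rfl⟩
  · rintro ⟨r, hr, hK, rfl⟩
    exact ⟨r, hr, by rwa [neg_inter_eq hr, h, ← neg_inter_eq hr], rfl⟩

theorem subset_atomsOf_of_isAnswerSet (hF : F ⊆ atomsOf P)
    (hM : isAnswerSet (P ∪ factsOf F) M) : M ⊆ atomsOf P := by
  obtain ⟨hFM, hmod, hmin⟩ := isAnswerSet_union_factsOf_iff.mp hM
  exact inter_eq_left.mp <| hmin _ inter_subset_left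
    ((isModel_inter_iff atomsOf_reduct_subset).mpr hmod) (subset_inter hFM hF)

theorem isAnswerSet_union_factsOf_union (hM : isAnswerSet (P ∪ factsOf (F ∩ atomsOf P)) M) :
    isAnswerSet (P ∪ factsOf F) (M ∪ F) := by
  have hMS : M ⊆ atomsOf P := subset_atomsOf_of_isAnswerSet inter_subset_right hM
  obtain ⟨hFM, hmod, hmin⟩ := isAnswerSet_union_factsOf_iff.mp hM
  have hinter : (M ∪ F) ∩ atomsOf P = M := by
    rw [union_inter_distrib_right, inter_eq_left.mpr hMS, union_eq_left.mpr hFM]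
  have hred : reduct P (M ∪ F) = reduct P M :=
    reduct_congr (by rw [hinter, inter_eq_left.mpr hMS])
  refine isAnswerSet_union_factsOf_iff.mpr ⟨subset_union_right, ?_, fun N hN hNmod hFN => ?_⟩
  · rw [hred, ← isModel_inter_iff atomsOf_reduct_subset, hinter]
    exact hmod
  · rw [hred] at hNmod
    have hNS : N ∩ atomsOf P = M :=
      hmin _ (hinter ▸ inter_subset_inter_left _ hN)
        ((isModel_inter_iff atomsOf_reduct_subset).mpr hNmod) (inter_subset_inter_left _ hFN)
    exact hN.antisymm (union_subset (hNS ▸ inter_subset_left) hFN)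

theorem superCoherent_of_forall_subset_atomsOf
    (h : ∀ F ⊆ atomsOf P, ∃ M, isAnswerSet (P ∪ factsOf F) M) : superCoherent P := fun F =>
  let ⟨_, hM⟩ := h (F ∩ atomsOf P) inter_subset_right
  ⟨_, isAnswerSet_union_factsOf_union hM⟩

end AnswerSets

section Literals

open Function

variable {A : Type} {V W I F S T : Set A} {bar : A → A}

def Consistent (V : Set A) (bar : A → A) (S : Set A) : Prop := ∀ x ∈ V, x ∈ S → bar x ∉ S

theorem Consistent.mono (hS : Consistent V bar S) (hTS : T ⊆ S) : Consistent V bar T :=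
  fun x hx hxT hbxT => hS x hx (hTS hxT) (hTS hbxT)

theorem Consistent.union (hS : Consistent V bar S) (hT : Disjoint T (V ∪ bar '' V)) :
    Consistent V bar (S ∪ T) := by
  have hxV {x : A} (hx : x ∈ V) : x ∉ T := disjoint_left.mp hT.symm (Or.inl hx)
  have hbxV {x : A} (hx : x ∈ V) : bar x ∉ T :=
    disjoint_left.mp hT.symm (Or.inr (mem_image_of_mem bar hx))
  rintro x hx (hxS | hxT) (hbxS | hbxT)
  exacts [hS x hx hxS hbxS, hbxV hx hbxT, hxV hx hxT, hxV hx hxT]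

theorem consistent_Omod (hinj : Injective bar) (hV : Disjoint (bar '' V) V) (hI : I ⊆ V) :
    Consistent V bar (Omod V bar I) := by
  rintro x hx (hxI | ⟨y, hy, rfl⟩) (hbxI | hbx)
  · exact disjoint_left.mp hV (mem_image_of_mem bar hx) (hI hbxI)
  · exact (hinj.mem_set_image.mp hbx).2 hxI
  all_goals exact disjoint_left.mp hV (mem_image_of_mem bar hy.1) hx

theorem Omod_subset (hI : I ⊆ V) : Omod V bar I ⊆ V ∪ bar '' V :=
  union_subset_union hI (image_mono sdiff_subset)

theorem inter_subset_Omod (hF : Consistent V bar F) :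
    F ∩ (V ∪ bar '' V) ⊆ Omod V bar (F ∩ V) := by
  rintro a ⟨haF, haV | ⟨x, hx, rfl⟩⟩
  · exact Or.inl ⟨haF, haV⟩
  · exact Or.inr ⟨x, ⟨hx, fun hxF => hF x hx hxF.1 haF⟩, rfl⟩

theorem disjoint_union_image (hinj : Injective bar)
    (hbar : Disjoint (bar '' (V ∪ W)) (V ∪ W)) (hVW : Disjoint V W) :
    Disjoint (V ∪ bar '' V) (W ∪ bar '' W) := by
  simp only [disjoint_union_left, disjoint_union_right]
  exact ⟨⟨hVW, Disjoint.mono (image_mono subset_union_left) subset_union_right hbar⟩,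
    Disjoint.mono subset_union_left (image_mono subset_union_right) hbar.symm,
    (disjoint_image_iff hinj).mpr hVW⟩

theorem consistent_Omod_union (hinj : Injective bar) (hbar : Disjoint (bar '' (V ∪ W)) (V ∪ W))
    (hVW : Disjoint V W) (hI : I ⊆ V) (hT : T ⊆ W ∪ bar '' W) :
    Consistent V bar (Omod V bar I ∪ T) :=
  (consistent_Omod hinj (hbar.mono (image_mono subset_union_left) subset_union_left) hI).union
    ((disjoint_union_image hinj (union_comm V W ▸ hbar) hVW.symm).mono_left hT)

end Literals

section PhiReduction

open Function

variable {A : Type} {X Y Z : Set A} {bar : A → A} {u v w : A} {I J K F S T : Set A}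

theorem Mmod_eq :
    Mmod X Y Z bar u v I J = Omod X bar I ∪ Omod Y bar J ∪ (Z ∪ bar '' Z) ∪ {u, v} := by
  simp only [Mmod, Omod, union_assoc]

theorem Mmod'_eq :
    Mmod' X Y Z bar v w I J = Omod X bar I ∪ Omod Y bar J ∪ (Z ∪ bar '' Z) ∪ {v, w} := by
  simp only [Mmod', Omod, union_assoc]

theorem Nmod_eq : Nmod X Y Z bar v I J K = Omod X bar I ∪ Omod Y bar J ∪ Omod Z bar K ∪ {v} := by
  simp only [Nmod, Omod, union_assoc]

theorem Uall_eq : Uall X Y Z bar u v w =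
    (X ∪ bar '' X) ∪ (Y ∪ bar '' Y) ∪ (Z ∪ bar '' Z) ∪ {u, v, w} := by
  simp only [Uall]
  ac_rfl

theorem Omod_union_Omod_union_subset (hI : I ⊆ X) (hJ : J ⊆ Y) (hT : T ⊆ Z ∪ bar '' Z) :
    Omod X bar I ∪ Omod Y bar J ∪ T ⊆ X ∪ Y ∪ Z ∪ bar '' (X ∪ Y ∪ Z) :=
  (union_subset_union (union_subset_union (Omod_subset hI) (Omod_subset hJ)) hT).trans
    (subset_of_eq (by simp only [image_union]; ac_rfl))

theorem subset_Omod_union_Omod (hX : Consistent X bar F) (hY : Consistent Y bar F)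
    (hF : F ⊆ Uall X Y Z bar u v w) :
    F ⊆ Omod X bar (F ∩ X) ∪ Omod Y bar (F ∩ Y) ∪ (Z ∪ bar '' Z) ∪ {u, v, w} := by
  intro a ha
  rcases Uall_eq ▸ hF ha with ((haX | haY) | haZ) | huvw
  · exact Or.inl (Or.inl (Or.inl (inter_subset_Omod hX ⟨ha, haX⟩)))
  · exact Or.inl (Or.inl (Or.inr (inter_subset_Omod hY ⟨ha, haY⟩)))
  · exact Or.inl (Or.inr haZ)
  · exact Or.inr huvw

theorem subset_Mmod (hX : Consistent X bar F) (hY : Consistent Y bar F)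
    (hF : F ⊆ Uall X Y Z bar u v w) (hw : w ∉ F) : F ⊆ Mmod X Y Z bar u v (F ∩ X) (F ∩ Y) := by
  intro a ha
  rw [Mmod_eq]
  rcases subset_Omod_union_Omod hX hY hF ha with h | h
  · exact Or.inl h
  · rcases h with rfl | rfl | rfl
    exacts [Or.inr (Or.inl rfl), Or.inr (Or.inr rfl), absurd ha hw]

theorem subset_Mmod' (hX : Consistent X bar F) (hY : Consistent Y bar F)
    (hF : F ⊆ Uall X Y Z bar u v w) (hu : u ∉ F) : F ⊆ Mmod' X Y Z bar v w (F ∩ X) (F ∩ Y) := by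
  intro a ha
  rw [Mmod'_eq]
  rcases subset_Omod_union_Omod hX hY hF ha with h | h
  · exact Or.inl h
  · rcases h with rfl | rfl | rfl
    exacts [absurd ha hu, Or.inr (Or.inl rfl), Or.inr (Or.inr rfl)]

theorem subset_Mmod'_of_subset (hX : Consistent X bar F) (hFX : F ⊆ X ∪ bar '' X) :
    F ⊆ Mmod' X Y Z bar v w (F ∩ X) J := fun a ha => by
  rw [Mmod'_eq]
  exact Or.inl (Or.inl (Or.inl (inter_subset_Omod hX ⟨ha, hFX ha⟩)))

theorem notMem_Omod_union_Omod_union_union {E : Set A} {a : A} (hI : I ⊆ X) (hJ : J ⊆ Y)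
    (hT : T ⊆ Z ∪ bar '' Z) (ha : a ∉ X ∪ Y ∪ Z ∪ bar '' (X ∪ Y ∪ Z)) (haE : a ∉ E) :
    a ∉ Omod X bar I ∪ Omod Y bar J ∪ T ∪ E := by
  rintro (ha' | ha')
  exacts [ha (Omod_union_Omod_union_subset hI hJ hT ha'), haE ha']

def Admissible (X Y : Set A) (bar : A → A) (u w : A) (S : Set A) : Prop :=
  Consistent X bar S ∧ Consistent Y bar S ∧ (u ∈ S → w ∉ S)

theorem Admissible.mono (hS : Admissible X Y bar u w S) (hTS : T ⊆ S) :
    Admissible X Y bar u w T :=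
  ⟨hS.1.mono hTS, hS.2.1.mono hTS, fun hu hw => hS.2.2 (hTS hu) (hTS hw)⟩

structure PhiAtoms (X Y Z : Set A) (bar : A → A) (u v w : A) : Prop where
  disjoint_XY : Disjoint X Y
  disjoint_XZ : Disjoint X Z
  disjoint_YZ : Disjoint Y Z
  bar_injective : Injective bar
  disjoint_bar : Disjoint (bar '' (X ∪ Y ∪ Z)) (X ∪ Y ∪ Z)
  u_ne_v : u ≠ v
  u_ne_w : u ≠ w
  v_ne_w : v ≠ w
  u_fresh : u ∉ X ∪ Y ∪ Z ∪ bar '' (X ∪ Y ∪ Z)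
  v_fresh : v ∉ X ∪ Y ∪ Z ∪ bar '' (X ∪ Y ∪ Z)
  w_fresh : w ∉ X ∪ Y ∪ Z ∪ bar '' (X ∪ Y ∪ Z)

namespace PhiAtoms

theorem disjoint_extra (h : PhiAtoms X Y Z bar u v w) {V : Set A} (hV : V ⊆ X ∪ Y ∪ Z) :
    Disjoint {u, v, w} (V ∪ bar '' V) := by
  have hfresh {a : A} (ha : a ∉ X ∪ Y ∪ Z ∪ bar '' (X ∪ Y ∪ Z)) : a ∉ V ∪ bar '' V :=
    fun haV => ha (union_subset_union hV (image_mono hV) haV)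
  simp only [disjoint_insert_left, disjoint_singleton_left]
  exact ⟨hfresh h.u_fresh, hfresh h.v_fresh, hfresh h.w_fresh⟩

theorem consistent_of_subset (h : PhiAtoms X Y Z bar u v w) (hI : I ⊆ X) (hJ : J ⊆ Y)
    (hS : S ⊆ Omod X bar I ∪ Omod Y bar J ∪ (Z ∪ bar '' Z) ∪ {u, v, w}) :
    Consistent X bar S ∧ Consistent Y bar S := by
  -- the bound is `M[I,J] ∪ M'[I,J]`
  constructor
  · have hT : Omod Y bar J ∪ (Z ∪ bar '' Z) ⊆ (Y ∪ Z) ∪ bar '' (Y ∪ Z) := by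
      rw [image_union, union_union_union_comm]
      exact union_subset_union_left _ (Omod_subset hJ)
    have hbar : Disjoint (bar '' (X ∪ (Y ∪ Z))) (X ∪ (Y ∪ Z)) := by
      rw [← union_assoc]
      exact h.disjoint_bar
    exact ((consistent_Omod_union h.bar_injective hbar
      (h.disjoint_XY.union_right h.disjoint_XZ) hI hT).union
      (h.disjoint_extra (subset_union_left.trans subset_union_left))).mono
      (hS.trans (subset_of_eq (by ac_rfl)))
  · have hT : Omod X bar I ∪ (Z ∪ bar '' Z) ⊆ (X ∪ Z) ∪ bar '' (X ∪ Z) := by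
      rw [image_union, union_union_union_comm]
      exact union_subset_union_left _ (Omod_subset hI)
    have hbar : Disjoint (bar '' (Y ∪ (X ∪ Z))) (Y ∪ (X ∪ Z)) := by
      rw [union_left_comm, ← union_assoc]
      exact h.disjoint_bar
    exact ((consistent_Omod_union h.bar_injective hbar
      (h.disjoint_XY.symm.union_right h.disjoint_YZ) hJ hT).union
      (h.disjoint_extra (subset_union_right.trans subset_union_left))).mono
      (hS.trans (subset_of_eq (by ac_rfl)))

theorem admissible_of_subset (h : PhiAtoms X Y Z bar u v w) (hI : I ⊆ X) (hJ : J ⊆ Y)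
    (hS : S ⊆ Omod X bar I ∪ Omod Y bar J ∪ (Z ∪ bar '' Z) ∪ {u, v, w})
    (hSuw : u ∉ S ∨ w ∉ S) : Admissible X Y bar u w S :=
  have hc := h.consistent_of_subset hI hJ hS
  ⟨hc.1, hc.2, fun hu hw => hSuw.elim (· hu) (· hw)⟩

theorem admissible_Mmod (h : PhiAtoms X Y Z bar u v w) (hI : I ⊆ X) (hJ : J ⊆ Y) :
    Admissible X Y bar u w (Mmod X Y Z bar u v I J) := by
  rw [Mmod_eq]
  refine h.admissible_of_subset hI hJ (union_subset_union_right _ ?_) (Or.inr ?_)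
  · exact insert_subset_insert (singleton_subset_iff.mpr (mem_insert v {w}))
  · exact notMem_Omod_union_Omod_union_union hI hJ subset_rfl h.w_fresh
      (by simp [h.u_ne_w.symm, h.v_ne_w.symm])

theorem admissible_Mmod' (h : PhiAtoms X Y Z bar u v w) (hI : I ⊆ X) (hJ : J ⊆ Y) :
    Admissible X Y bar u w (Mmod' X Y Z bar v w I J) := by
  rw [Mmod'_eq]
  refine h.admissible_of_subset hI hJ (union_subset_union_right _ (subset_insert u _)) (Or.inl ?_)
  exact notMem_Omod_union_Omod_union_union hI hJ subset_rfl h.u_fresh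
    (by simp [h.u_ne_v, h.u_ne_w])

theorem w_notMem_Nmod (h : PhiAtoms X Y Z bar u v w) (hI : I ⊆ X) (hJ : J ⊆ Y) (hK : K ⊆ Z) :
    w ∉ Nmod X Y Z bar v I J K := by
  rw [Nmod_eq]
  exact notMem_Omod_union_Omod_union_union hI hJ (Omod_subset hK) h.w_fresh
    (by simp [h.v_ne_w.symm])

theorem admissible_Nmod (h : PhiAtoms X Y Z bar u v w) (hI : I ⊆ X) (hJ : J ⊆ Y) (hK : K ⊆ Z) :
    Admissible X Y bar u w (Nmod X Y Z bar v I J K) := by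
  refine h.admissible_of_subset hI hJ ?_ (Or.inr (h.w_notMem_Nmod hI hJ hK))
  rw [Nmod_eq]
  exact union_subset_union (union_subset_union_right _ (Omod_subset hK)) (by simp)

theorem admissible_Omod (h : PhiAtoms X Y Z bar u v w) (hI : I ⊆ X) :
    Admissible X Y bar u w (Omod X bar I) := by
  have hsub : Omod X bar I ⊆ Omod X bar I ∪ Omod Y bar ∅ ∪ (Z ∪ bar '' Z) ∪ {u, v, w} :=
    subset_union_left.trans (subset_union_left.trans subset_union_left)
  have hX : X ⊆ X ∪ Y ∪ Z := subset_union_left.trans subset_union_left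
  refine h.admissible_of_subset hI (empty_subset Y) hsub (Or.inl fun hu => h.u_fresh ?_)
  exact union_subset_union hX (image_mono hX) (Omod_subset hI hu)

end PhiAtoms

structure HasPhiReductModels (P : Program A) (X Y Z : Set A) (bar : A → A) (u v w : A)
    (phi : Set A → Prop) : Prop where
  reduct_Mmod : ∀ I, I ⊆ X → ∀ J, J ⊆ Y → ∀ N ⊆ Mmod X Y Z bar u v I J,
    (isModel (reduct P (Mmod X Y Z bar u v I J)) N ↔
      (N = Mmod X Y Z bar u v I J ∨ N = Omod X bar I))
  reduct_Mmod' : ∀ I, I ⊆ X → ∀ J, J ⊆ Y → ∀ N ⊆ Mmod' X Y Z bar v w I J,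
    (isModel (reduct P (Mmod' X Y Z bar v w I J)) N ↔
      (N = Mmod' X Y Z bar v w I J ∨
        ∃ K, K ⊆ Z ∧ ¬ phi (I ∪ J ∪ K) ∧ N = Nmod X Y Z bar v I J K))
  reduct_Uall : ∀ N ⊆ Uall X Y Z bar u v w,
    (isModel (reduct P (Uall X Y Z bar u v w)) N ↔
      (N = Uall X Y Z bar u v w ∨ ∃ I, I ⊆ X ∧ ∃ J, J ⊆ Y ∧
        (N = Mmod X Y Z bar u v I J ∨ N = Mmod' X Y Z bar v w I J ∨ N = Omod X bar I ∨
          ∃ K, K ⊆ Z ∧ ¬ phi (I ∪ J ∪ K) ∧ N = Nmod X Y Z bar v I J K)))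

namespace HasPhiReductModels

variable {P : Program A} {phi : Set A → Prop}

theorem isAnswerSet_Mmod (hP : HasPhiReductModels P X Y Z bar u v w phi) (hI : I ⊆ X)
    (hJ : J ⊆ Y) (hFM : F ⊆ Mmod X Y Z bar u v I J) (hFO : ¬F ⊆ Omod X bar I) :
    isAnswerSet (P ∪ factsOf F) (Mmod X Y Z bar u v I J) :=
  isAnswerSet_union_factsOf_of_models (hP.reduct_Mmod I hI J hJ) hFM fun _ hN => hN ▸ hFO

theorem isAnswerSet_Mmod'_of_forall_phi (hP : HasPhiReductModels P X Y Z bar u v w phi)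
    (hI : I ⊆ X) (hJ : J ⊆ Y) (hphi : ∀ K, K ⊆ Z → phi (I ∪ J ∪ K))
    (hFM : F ⊆ Mmod' X Y Z bar v w I J) :
    isAnswerSet (P ∪ factsOf F) (Mmod' X Y Z bar v w I J) :=
  isAnswerSet_union_factsOf_of_models (hP.reduct_Mmod' I hI J hJ) hFM
    fun _ ⟨K, hK, hnphi, _⟩ _ => hnphi (hphi K hK)

theorem isAnswerSet_Mmod'_of_w_mem (hP : HasPhiReductModels P X Y Z bar u v w phi)
    (hA : PhiAtoms X Y Z bar u v w) (hI : I ⊆ X) (hJ : J ⊆ Y) (hw : w ∈ F)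
    (hFM : F ⊆ Mmod' X Y Z bar v w I J) :
    isAnswerSet (P ∪ factsOf F) (Mmod' X Y Z bar v w I J) :=
  isAnswerSet_union_factsOf_of_models (hP.reduct_Mmod' I hI J hJ) hFM
    fun _ ⟨_, hK, _, hN⟩ hFN => hA.w_notMem_Nmod hI hJ hK (hN ▸ hFN hw)

theorem isAnswerSet_Uall (hP : HasPhiReductModels P X Y Z bar u v w phi)
    (hA : PhiAtoms X Y Z bar u v w) (hF : F ⊆ Uall X Y Z bar u v w)
    (hFA : ¬Admissible X Y bar u w F) :
    isAnswerSet (P ∪ factsOf F) (Uall X Y Z bar u v w) := by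
  refine isAnswerSet_union_factsOf_of_models hP.reduct_Uall hF ?_
  rintro N ⟨I, hI, J, hJ, rfl | rfl | rfl | ⟨K, hK, -, rfl⟩⟩ hFN
  exacts [hFA ((hA.admissible_Mmod hI hJ).mono hFN), hFA ((hA.admissible_Mmod' hI hJ).mono hFN),
    hFA ((hA.admissible_Omod hI).mono hFN), hFA ((hA.admissible_Nmod hI hJ hK).mono hFN)]

theorem exists_isAnswerSet (hP : HasPhiReductModels P X Y Z bar u v w phi)
    (hA : PhiAtoms X Y Z bar u v w) (htrue : ∀ I, I ⊆ X → ∃ J, J ⊆ Y ∧ ∀ K, K ⊆ Z → phi (I ∪ J ∪ K))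
    (hF : F ⊆ Uall X Y Z bar u v w) : ∃ M, isAnswerSet (P ∪ factsOf F) M := by
  by_cases hFA : Admissible X Y bar u w F
  swap
  · exact ⟨_, hP.isAnswerSet_Uall hA hF hFA⟩
  obtain ⟨hX, hY, huw⟩ := hFA
  have hI : F ∩ X ⊆ X := inter_subset_right
  have hJ : F ∩ Y ⊆ Y := inter_subset_right
  by_cases hFX : F ⊆ X ∪ bar '' X
  · obtain ⟨J, hJ, hphi⟩ := htrue _ hI
    exact ⟨_, hP.isAnswerSet_Mmod'_of_forall_phi hI hJ hphi (subset_Mmod'_of_subset hX hFX)⟩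
  by_cases hw : w ∈ F
  · exact ⟨_, hP.isAnswerSet_Mmod'_of_w_mem hA hI hJ hw
      (subset_Mmod' hX hY hF fun hu => huw hu hw)⟩
  · exact ⟨_, hP.isAnswerSet_Mmod hI hJ (subset_Mmod hX hY hF hw)
      fun hFO => hFX (hFO.trans (Omod_subset hI))⟩

end HasPhiReductModels

end PhiReduction

theorem phiReduction_true_superCoherent_general {A : Type}
    (X Y Z : Set A) (bar : A → A) (u v w : A) (phi : Set A → Prop) (P : Program A)
    (hXY : Disjoint X Y) (hXZ : Disjoint X Z) (hYZ : Disjoint Y Z)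
    (hbarinj : Function.Injective bar)
    (hbarfresh : Disjoint (bar '' (X ∪ Y ∪ Z)) (X ∪ Y ∪ Z))
    (huv : u ≠ v) (huw : u ≠ w) (hvw : v ≠ w)
    (hufresh : u ∉ X ∪ Y ∪ Z ∪ bar '' (X ∪ Y ∪ Z))
    (hvfresh : v ∉ X ∪ Y ∪ Z ∪ bar '' (X ∪ Y ∪ Z))
    (hwfresh : w ∉ X ∪ Y ∪ Z ∪ bar '' (X ∪ Y ∪ Z))
    (hatoms : atomsOf P = Uall X Y Z bar u v w)
    (hredM : ∀ I, I ⊆ X → ∀ J, J ⊆ Y → ∀ N ⊆ Mmod X Y Z bar u v I J,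
       (isModel (reduct P (Mmod X Y Z bar u v I J)) N ↔
         (N = Mmod X Y Z bar u v I J ∨ N = Omod X bar I)))
    (hredM' : ∀ I, I ⊆ X → ∀ J, J ⊆ Y → ∀ N ⊆ Mmod' X Y Z bar v w I J,
       (isModel (reduct P (Mmod' X Y Z bar v w I J)) N ↔
         (N = Mmod' X Y Z bar v w I J ∨
           ∃ K, K ⊆ Z ∧ ¬ phi (I ∪ J ∪ K) ∧ N = Nmod X Y Z bar v I J K)))
    (hredU : ∀ N ⊆ Uall X Y Z bar u v w,
       (isModel (reduct P (Uall X Y Z bar u v w)) N ↔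
         (N = Uall X Y Z bar u v w ∨ ∃ I, I ⊆ X ∧ ∃ J, J ⊆ Y ∧
           (N = Mmod X Y Z bar u v I J ∨ N = Mmod' X Y Z bar v w I J ∨ N = Omod X bar I ∨
             ∃ K, K ⊆ Z ∧ ¬ phi (I ∪ J ∪ K) ∧ N = Nmod X Y Z bar v I J K))))
    (htrue : ∀ I, I ⊆ X → ∃ J, J ⊆ Y ∧ ∀ K, K ⊆ Z → phi (I ∪ J ∪ K)) :
    (∀ F ⊆ Uall X Y Z bar u v w, ∃ M, isAnswerSet (P ∪ factsOf F) M) ∧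
      superCoherent P := by
  have hA : PhiAtoms X Y Z bar u v w :=
    ⟨hXY, hXZ, hYZ, hbarinj, hbarfresh, huv, huw, hvw, hufresh, hvfresh, hwfresh⟩
  have hP : HasPhiReductModels P X Y Z bar u v w phi := ⟨hredM, hredM', hredU⟩
  have hsc : superCoherent P := superCoherent_of_forall_subset_atomsOf fun F hF =>
    hP.exists_isAnswerSet hA htrue (hatoms ▸ hF)
  exact ⟨fun F _ => hsc F, hsc⟩

/-- If Φ = ∀X∃Y∀Z φ is true, then any Φ-reduction P is super-coherent:
for every F ⊆ U, P ∪ F has an answer set. -/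
theorem phiReduction_true_superCoherent {A : Type}
    (X Y Z : Set A) (bar : A → A) (u v w : A) (phi : Set A → Prop) (P : Program A)
    (hXne : X.Nonempty) (hYne : Y.Nonempty) (hZne : Z.Nonempty)
    (hXY : Disjoint X Y) (hXZ : Disjoint X Z) (hYZ : Disjoint Y Z)
    (hbarinj : Function.Injective bar)
    (hbarfresh : Disjoint (bar '' (X ∪ Y ∪ Z)) (X ∪ Y ∪ Z))
    (huv : u ≠ v) (huw : u ≠ w) (hvw : v ≠ w)
    (hufresh : u ∉ X ∪ Y ∪ Z ∪ bar '' (X ∪ Y ∪ Z))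
    (hvfresh : v ∉ X ∪ Y ∪ Z ∪ bar '' (X ∪ Y ∪ Z))
    (hwfresh : w ∉ X ∪ Y ∪ Z ∪ bar '' (X ∪ Y ∪ Z))
    (hatoms : atomsOf P = Uall X Y Z bar u v w)
    (hmodels : ∀ M ⊆ Uall X Y Z bar u v w, (isModel P M ↔
       (M = Uall X Y Z bar u v w ∨ ∃ I, I ⊆ X ∧ ∃ J, J ⊆ Y ∧
         (M = Mmod X Y Z bar u v I J ∨ M = Mmod' X Y Z bar v w I J))))
    (hredM : ∀ I, I ⊆ X → ∀ J, J ⊆ Y → ∀ N ⊆ Mmod X Y Z bar u v I J,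
       (isModel (reduct P (Mmod X Y Z bar u v I J)) N ↔
         (N = Mmod X Y Z bar u v I J ∨ N = Omod X bar I)))
    (hredM' : ∀ I, I ⊆ X → ∀ J, J ⊆ Y → ∀ N ⊆ Mmod' X Y Z bar v w I J,
       (isModel (reduct P (Mmod' X Y Z bar v w I J)) N ↔
         (N = Mmod' X Y Z bar v w I J ∨
           ∃ K, K ⊆ Z ∧ ¬ phi (I ∪ J ∪ K) ∧ N = Nmod X Y Z bar v I J K)))
    (hredU : ∀ N ⊆ Uall X Y Z bar u v w,
       (isModel (reduct P (Uall X Y Z bar u v w)) N ↔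
         (N = Uall X Y Z bar u v w ∨ ∃ I, I ⊆ X ∧ ∃ J, J ⊆ Y ∧
           (N = Mmod X Y Z bar u v I J ∨ N = Mmod' X Y Z bar v w I J ∨ N = Omod X bar I ∨
             ∃ K, K ⊆ Z ∧ ¬ phi (I ∪ J ∪ K) ∧ N = Nmod X Y Z bar v I J K))))
    (htrue : ∀ I, I ⊆ X → ∃ J, J ⊆ Y ∧ ∀ K, K ⊆ Z → phi (I ∪ J ∪ K)) :
    (∀ F ⊆ Uall X Y Z bar u v w, ∃ M, isAnswerSet (P ∪ factsOf F) M) ∧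
      superCoherent P :=
  phiReduction_true_superCoherent_general X Y Z bar u v w phi P hXY hXZ hYZ hbarinj hbarfresh huv
    huw hvw hufresh hvfresh hwfresh hatoms hredM hredM' hredU htrue
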